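/- arXiv:0806.1349 — 7 statements merged into one kernel-verified Lean document; each statement's English description precedes it below -/
import Mathlib

section
/- Let ω be a nonzero real number and let q, p : ℝ → ℝ be differentiable functions. Define the time-dependent 3×3 real matrix L(t) = [[p(t), ω·q(t), 0], [ω·q(t), −p(t), 0], [0, 0, 1]] and the constant 3×3 real matrix M = (ω/2)·[[0, −1, 0], [1, 0, 0], [0, 0, 0]]. Then L satisfies the Lax equation dL/dt = M·L − L·M at every time t if and only if q and p satisfy the Hamiltonian equations of the harmonic oscillator, q′ = p and p′ = −ω²·q, at every time t. -/
/-- The constant matrix `M = (ω/2)·[[0,−1,0],[1,0,0],[0,0,0]]`. -/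
noncomputable def M3 (ω : ℝ) : Matrix (Fin 3) (Fin 3) ℝ :=
  (ω / 2) • !![0, -1, 0; 1, 0, 0; 0, 0, 0]

/-- The time-dependent matrix `L(t) = [[p t, ω·q t, 0],[ω·q t, −p t, 0],[0,0,1]]`. -/
noncomputable def L3 (ω : ℝ) (q p : ℝ → ℝ) (t : ℝ) : Matrix (Fin 3) (Fin 3) ℝ :=
  !![p t, ω * q t, 0; ω * q t, -(p t), 0; 0, 0, 1]

/-- `(L, M)` is a 3-dimensional Lax representation for the harmonic oscillator:
`dL/dt = M·L − L·M` holds at every time iff `q′ = p` and `p′ = −ω²·q` hold at every time. -/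
theorem lax_representation_harmonic_oscillator
    (ω : ℝ) (hω : ω ≠ 0) (q p : ℝ → ℝ)
    (hq : Differentiable ℝ q) (hp : Differentiable ℝ p) :
    (∀ t : ℝ, ∀ i j : Fin 3,
        deriv (fun s => L3 ω q p s i j) t
          = (M3 ω * L3 ω q p t - L3 ω q p t * M3 ω) i j)
      ↔ (∀ t : ℝ, deriv q t = p t ∧ deriv p t = -(ω ^ 2) * q t) := by
  constructor
  · intro h t
    have h00 := h t 0 0
    have h01 := h t 0 1
    simp [L3, M3, Matrix.mul_apply, Fin.sum_univ_three] at h00 h01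
    refine ⟨?_, ?_⟩
    · have : ω * deriv q t = ω * p t := by rw [h01]; ring
      exact mul_left_cancel₀ hω this
    · rw [h00]; ring
  · intro h t i j
    obtain ⟨h1, h2⟩ := h t
    fin_cases i <;> fin_cases j <;>
      simp [L3, M3, Matrix.mul_apply, Fin.sum_univ_three, h1, h2] <;>
      ring
end

section
/- Let ω be a real number, let C₁, …, C₉ be real parameters, and let q, p, A₊, A₋ : ℝ → ℝ be differentiable functions. Define the time-dependent anti-commutative structure constants μ^i_{jk} (i, j, k ∈ {1,2,3}) by: μ^i_{jk} = −μ^i_{kj} for all indices, μ¹₂₃ = C₂·p − C₃·ω·q − C₄, μ²₁₃ = C₂·p − C₃·ω·q + C₄, μ¹₃₁ = C₂·ω·q + C₃·p − C₁, μ²₂₃ = C₂·ω·q + C₃·p + C₁, μ¹₁₂ = C₅·A₊ + C₆·A₋, μ²₁₂ = C₅·A₋ − C₆·A₊, μ³₁₃ = C₇·A₊ + C₈·A₋, μ³₂₃ = C₇·A₋ − C₈·A₊, μ³₁₂ = C₉, and μ^i_{jk} = 0 for every remaining index combination not determined by these formulas and antisymmetry. Define G₊ = p′ + ω²·q, G₋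 = ω·(q′ − p), g₊ = A₊′ + (ω/2)·A₋, g₋ = A₋′ − (ω/2)·A₊. Then μ satisfies the nine anti-commutative operadic Lax equations (μ̇¹₁₂ = −(ω/2)μ²₁₂; μ̇²₁₂ = (ω/2)μ¹₁₂; μ̇³₁₂ = 0; μ̇¹₁₃ = −(ω/2)(μ¹₂₃ + μ²₁₃); μ̇²₁₃ = −(ω/2)(μ²₂₃ − μ¹₁₃); μ̇³₁₃ = −(ω/2)μ³₂₃; μ̇¹₂₃ = (ω/2)(μ¹₁₃ − μ²₂₃); μ̇²₂₃ = (ω/2)(μ²₁₃ + μ¹₂₃); μ̇³₂₃ = (ω/2)μ³₁₃) at every time if and only if at every time: C₂·G₊ − C₃·G₋ = 0, C₃·G₊ + C₂·G₋ = 0, C₅·g₊ + C₆·g₋ = 0, C₅·g₋ − C₆·g₊ = 0, C₇·g₊ + C₈·g₋ = 0, and C₇·g₋ − C₈·g₊ = 0. -/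
set_option maxHeartbeats 1000000


/-- The time-dependent anti-commutative structure constants `μ^i_{jk}` of
Theorem 5 of the paper (indices `1,2,3` correspond to `0,1,2`):
`μ¹₂₃ = C₂p − C₃ωq − C₄`, `μ²₁₃ = C₂p − C₃ωq + C₄`, `μ¹₃₁ = C₂ωq + C₃p − C₁`,
`μ²₂₃ = C₂ωq + C₃p + C₁`, `μ¹₁₂ = C₅A₊ + C₆A₋`, `μ²₁₂ = C₅A₋ − C₆A₊`,
`μ³₁₃ = C₇A₊ + C₈A₋`, `μ³₂₃ = C₇A₋ − C₈A₊`, `μ³₁₂ = C₉`,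
with `μ^i_{jk} = −μ^i_{kj}` and all remaining components zero. -/
noncomputable def μop (ω C₁ C₂ C₃ C₄ C₅ C₆ C₇ C₈ C₉ : ℝ) (q p Ap Am : ℝ → ℝ) :
    Fin 3 → Fin 3 → Fin 3 → ℝ → ℝ :=
  ![![![fun _ => 0,
        fun t => C₅ * Ap t + C₆ * Am t,
        fun t => -(C₂ * ω * q t + C₃ * p t - C₁)],
      ![fun t => -(C₅ * Ap t + C₆ * Am t),
        fun _ => 0,
        fun t => C₂ * p t - C₃ * ω * q t - C₄],
      ![fun t => C₂ * ω * q t + C₃ * p t - C₁,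
        fun t => -(C₂ * p t - C₃ * ω * q t - C₄),
        fun _ => 0]],
    ![![fun _ => 0,
        fun t => C₅ * Am t - C₆ * Ap t,
        fun t => C₂ * p t - C₃ * ω * q t + C₄],
      ![fun t => -(C₅ * Am t - C₆ * Ap t),
        fun _ => 0,
        fun t => C₂ * ω * q t + C₃ * p t + C₁],
      ![fun t => -(C₂ * p t - C₃ * ω * q t + C₄),
        fun t => -(C₂ * ω * q t + C₃ * p t + C₁),
        fun _ => 0]],
    ![![fun _ => 0,
        fun _ => C₉,
        fun t => C₇ * Ap t + C₈ * Am t],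
      ![fun _ => -C₉,
        fun _ => 0,
        fun t => C₇ * Am t - C₈ * Ap t],
      ![fun t => -(C₇ * Ap t + C₈ * Am t),
        fun t => -(C₇ * Am t - C₈ * Ap t),
        fun _ => 0]]]

/-- The nine anti-commutative operadic Lax equations hold for `μ` at every time iff
`C₂G₊ − C₃G₋ = 0`, `C₃G₊ + C₂G₋ = 0`, `C₅g₊ + C₆g₋ = 0`, `C₅g₋ − C₆g₊ = 0`,
`C₇g₊ + C₈g₋ = 0`, `C₇g₋ − C₈g₊ = 0` at every time, where `G₊ = p′ + ω²q`,
`G₋ = ω(q′ − p)`, `g₊ = A₊′ + (ω/2)A₋`, `g₋ = A₋′ − (ω/2)A₊`. -/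
theorem operadic_lax_iff_Gamma_eqs (ω C₁ C₂ C₃ C₄ C₅ C₆ C₇ C₈ C₉ : ℝ)
    (q p Ap Am : ℝ → ℝ)
    (hq : Differentiable ℝ q) (hp : Differentiable ℝ p)
    (hAp : Differentiable ℝ Ap) (hAm : Differentiable ℝ Am) :
    (∀ t : ℝ,
        deriv (μop ω C₁ C₂ C₃ C₄ C₅ C₆ C₇ C₈ C₉ q p Ap Am 0 0 1) t
          = -(ω / 2) * μop ω C₁ C₂ C₃ C₄ C₅ C₆ C₇ C₈ C₉ q p Ap Am 1 0 1 t ∧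
        deriv (μop ω C₁ C₂ C₃ C₄ C₅ C₆ C₇ C₈ C₉ q p Ap Am 1 0 1) t
          = (ω / 2) * μop ω C₁ C₂ C₃ C₄ C₅ C₆ C₇ C₈ C₉ q p Ap Am 0 0 1 t ∧
        deriv (μop ω C₁ C₂ C₃ C₄ C₅ C₆ C₇ C₈ C₉ q p Ap Am 2 0 1) t = 0 ∧
        deriv (μop ω C₁ C₂ C₃ C₄ C₅ C₆ C₇ C₈ C₉ q p Ap Am 0 0 2) t
          = -(ω / 2) * (μop ω C₁ C₂ C₃ C₄ C₅ C₆ C₇ C₈ C₉ q p Ap Am 0 1 2 t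
              + μop ω C₁ C₂ C₃ C₄ C₅ C₆ C₇ C₈ C₉ q p Ap Am 1 0 2 t) ∧
        deriv (μop ω C₁ C₂ C₃ C₄ C₅ C₆ C₇ C₈ C₉ q p Ap Am 1 0 2) t
          = -(ω / 2) * (μop ω C₁ C₂ C₃ C₄ C₅ C₆ C₇ C₈ C₉ q p Ap Am 1 1 2 t
              - μop ω C₁ C₂ C₃ C₄ C₅ C₆ C₇ C₈ C₉ q p Ap Am 0 0 2 t) ∧
        deriv (μop ω C₁ C₂ C₃ C₄ C₅ C₆ C₇ C₈ C₉ q p Ap Am 2 0 2) t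
          = -(ω / 2) * μop ω C₁ C₂ C₃ C₄ C₅ C₆ C₇ C₈ C₉ q p Ap Am 2 1 2 t ∧
        deriv (μop ω C₁ C₂ C₃ C₄ C₅ C₆ C₇ C₈ C₉ q p Ap Am 0 1 2) t
          = (ω / 2) * (μop ω C₁ C₂ C₃ C₄ C₅ C₆ C₇ C₈ C₉ q p Ap Am 0 0 2 t
              - μop ω C₁ C₂ C₃ C₄ C₅ C₆ C₇ C₈ C₉ q p Ap Am 1 1 2 t) ∧
        deriv (μop ω C₁ C₂ C₃ C₄ C₅ C₆ C₇ C₈ C₉ q p Ap Am 1 1 2) t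
          = (ω / 2) * (μop ω C₁ C₂ C₃ C₄ C₅ C₆ C₇ C₈ C₉ q p Ap Am 1 0 2 t
              + μop ω C₁ C₂ C₃ C₄ C₅ C₆ C₇ C₈ C₉ q p Ap Am 0 1 2 t) ∧
        deriv (μop ω C₁ C₂ C₃ C₄ C₅ C₆ C₇ C₈ C₉ q p Ap Am 2 1 2) t
          = (ω / 2) * μop ω C₁ C₂ C₃ C₄ C₅ C₆ C₇ C₈ C₉ q p Ap Am 2 0 2 t)
      ↔
    (∀ t : ℝ,
        C₂ * (deriv p t + ω ^ 2 * q t) - C₃ * (ω * (deriv q t - p t)) = 0 ∧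
        C₃ * (deriv p t + ω ^ 2 * q t) + C₂ * (ω * (deriv q t - p t)) = 0 ∧
        C₅ * (deriv Ap t + (ω / 2) * Am t) + C₆ * (deriv Am t - (ω / 2) * Ap t) = 0 ∧
        C₅ * (deriv Am t - (ω / 2) * Ap t) - C₆ * (deriv Ap t + (ω / 2) * Am t) = 0 ∧
        C₇ * (deriv Ap t + (ω / 2) * Am t) + C₈ * (deriv Am t - (ω / 2) * Ap t) = 0 ∧
        C₇ * (deriv Am t - (ω / 2) * Ap t) - C₈ * (deriv Ap t + (ω / 2) * Am t) = 0) := by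
  have key : ∀ t : ℝ,
      (deriv (μop ω C₁ C₂ C₃ C₄ C₅ C₆ C₇ C₈ C₉ q p Ap Am 0 0 1) t
          = -(ω / 2) * μop ω C₁ C₂ C₃ C₄ C₅ C₆ C₇ C₈ C₉ q p Ap Am 1 0 1 t ∧
        deriv (μop ω C₁ C₂ C₃ C₄ C₅ C₆ C₇ C₈ C₉ q p Ap Am 1 0 1) t
          = (ω / 2) * μop ω C₁ C₂ C₃ C₄ C₅ C₆ C₇ C₈ C₉ q p Ap Am 0 0 1 t ∧
        deriv (μop ω C₁ C₂ C₃ C₄ C₅ C₆ C₇ C₈ C₉ q p Ap Am 2 0 1) t = 0 ∧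
        deriv (μop ω C₁ C₂ C₃ C₄ C₅ C₆ C₇ C₈ C₉ q p Ap Am 0 0 2) t
          = -(ω / 2) * (μop ω C₁ C₂ C₃ C₄ C₅ C₆ C₇ C₈ C₉ q p Ap Am 0 1 2 t
              + μop ω C₁ C₂ C₃ C₄ C₅ C₆ C₇ C₈ C₉ q p Ap Am 1 0 2 t) ∧
        deriv (μop ω C₁ C₂ C₃ C₄ C₅ C₆ C₇ C₈ C₉ q p Ap Am 1 0 2) t
          = -(ω / 2) * (μop ω C₁ C₂ C₃ C₄ C₅ C₆ C₇ C₈ C₉ q p Ap Am 1 1 2 t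
              - μop ω C₁ C₂ C₃ C₄ C₅ C₆ C₇ C₈ C₉ q p Ap Am 0 0 2 t) ∧
        deriv (μop ω C₁ C₂ C₃ C₄ C₅ C₆ C₇ C₈ C₉ q p Ap Am 2 0 2) t
          = -(ω / 2) * μop ω C₁ C₂ C₃ C₄ C₅ C₆ C₇ C₈ C₉ q p Ap Am 2 1 2 t ∧
        deriv (μop ω C₁ C₂ C₃ C₄ C₅ C₆ C₇ C₈ C₉ q p Ap Am 0 1 2) t
          = (ω / 2) * (μop ω C₁ C₂ C₃ C₄ C₅ C₆ C₇ C₈ C₉ q p Ap Am 0 0 2 t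
              - μop ω C₁ C₂ C₃ C₄ C₅ C₆ C₇ C₈ C₉ q p Ap Am 1 1 2 t) ∧
        deriv (μop ω C₁ C₂ C₃ C₄ C₅ C₆ C₇ C₈ C₉ q p Ap Am 1 1 2) t
          = (ω / 2) * (μop ω C₁ C₂ C₃ C₄ C₅ C₆ C₇ C₈ C₉ q p Ap Am 1 0 2 t
              + μop ω C₁ C₂ C₃ C₄ C₅ C₆ C₇ C₈ C₉ q p Ap Am 0 1 2 t) ∧
        deriv (μop ω C₁ C₂ C₃ C₄ C₅ C₆ C₇ C₈ C₉ q p Ap Am 2 1 2) t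
          = (ω / 2) * μop ω C₁ C₂ C₃ C₄ C₅ C₆ C₇ C₈ C₉ q p Ap Am 2 0 2 t)
      ↔
      (C₂ * (deriv p t + ω ^ 2 * q t) - C₃ * (ω * (deriv q t - p t)) = 0 ∧
        C₃ * (deriv p t + ω ^ 2 * q t) + C₂ * (ω * (deriv q t - p t)) = 0 ∧
        C₅ * (deriv Ap t + (ω / 2) * Am t) + C₆ * (deriv Am t - (ω / 2) * Ap t) = 0 ∧
        C₅ * (deriv Am t - (ω / 2) * Ap t) - C₆ * (deriv Ap t + (ω / 2) * Am t) = 0 ∧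
        C₇ * (deriv Ap t + (ω / 2) * Am t) + C₈ * (deriv Am t - (ω / 2) * Ap t) = 0 ∧
        C₇ * (deriv Am t - (ω / 2) * Ap t) - C₈ * (deriv Ap t + (ω / 2) * Am t) = 0) := by
    intro t
    have dq := (hq t).hasDerivAt
    have dp := (hp t).hasDerivAt
    have dAp := (hAp t).hasDerivAt
    have dAm := (hAm t).hasDerivAt
    have d1 : deriv (fun s => C₅ * Ap s + C₆ * Am s) t
        = C₅ * deriv Ap t + C₆ * deriv Am t :=
      ((dAp.const_mul C₅).add (dAm.const_mul C₆)).deriv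
    have d2 : deriv (fun s => C₅ * Am s - C₆ * Ap s) t
        = C₅ * deriv Am t - C₆ * deriv Ap t :=
      ((dAm.const_mul C₅).sub (dAp.const_mul C₆)).deriv
    have d3 : deriv (fun _ : ℝ => C₉) t = 0 := deriv_const t C₉
    have d4 : deriv (fun s => -(C₂ * ω * q s + C₃ * p s - C₁)) t
        = -(C₂ * ω * deriv q t + C₃ * deriv p t) := by
      have : HasDerivAt (fun s => -(C₂ * ω * q s + C₃ * p s - C₁))
          (-(C₂ * ω * deriv q t + C₃ * deriv p t)) t :=
        (((dq.const_mul (C₂ * ω)).add (dp.const_mul C₃)).sub_const C₁).neg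
      exact this.deriv
    have d5 : deriv (fun s => C₂ * p s - C₃ * ω * q s + C₄) t
        = C₂ * deriv p t - C₃ * ω * deriv q t :=
      (((dp.const_mul C₂).sub (dq.const_mul (C₃ * ω))).add_const C₄).deriv
    have d6 : deriv (fun s => C₇ * Ap s + C₈ * Am s) t
        = C₇ * deriv Ap t + C₈ * deriv Am t :=
      ((dAp.const_mul C₇).add (dAm.const_mul C₈)).deriv
    have d7 : deriv (fun s => C₂ * p s - C₃ * ω * q s - C₄) t
        = C₂ * deriv p t - C₃ * ω * deriv q t :=
      (((dp.const_mul C₂).sub (dq.const_mul (C₃ * ω))).sub_const C₄).deriv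
    have d8 : deriv (fun s => C₂ * ω * q s + C₃ * p s + C₁) t
        = C₂ * ω * deriv q t + C₃ * deriv p t :=
      (((dq.const_mul (C₂ * ω)).add (dp.const_mul C₃)).add_const C₁).deriv
    have d9 : deriv (fun s => C₇ * Am s - C₈ * Ap s) t
        = C₇ * deriv Am t - C₈ * deriv Ap t :=
      ((dAm.const_mul C₇).sub (dAp.const_mul C₈)).deriv
    simp only [μop, Matrix.cons_val_zero, Matrix.cons_val_one, Matrix.head_cons,
      Matrix.cons_val_two, Matrix.tail_cons, Matrix.head_fin_const, Fin.isValue]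
    rw [d1, d2, d3, d4, d5, d6, d7, d8, d9]
    constructor
    · rintro ⟨h1, h2, h3, h4, h5, h6, h7, h8, h9⟩
      refine ⟨by linarith, by linarith, by linarith, by linarith, by linarith, by linarith⟩
    · rintro ⟨h1, h2, h3, h4, h5, h6⟩
      refine ⟨by linarith, by linarith, rfl, by linarith, by linarith, by linarith,
        by linarith, by linarith, by linarith⟩
  exact forall_congr' key
end

section
/- Let ω be a real number, let C₁, …, C₉ be real parameters, and let q, p, A₊, A₋ : ℝ → ℝ be differentiable functions satisfying at every time: A₊² + A₋² = 2·√(p² + ω²q²), A₊² − A₋² = 2p, A₊·A₋ = ω·q, and p² + ω²q² > 0. Define the anti-commutative structure constants μ^i_{jk} by: μ^i_{jk} = −μ^i_{kj}, μ¹₂₃ = C₂·p − C₃·ω·q − C₄, μ²₁₃ = C₂·p − C₃·ω·q + C₄, μ¹₃₁ = C₂·ω·q + C₃·p − C₁, μ²₂₃ = C₂·ω·q + C₃·p + C₁, μ¹₁₂ = C₅·A₊ + C₆·A₋, μ²₁₂ = C₅·A₋ − C₆·A₊, μ³₁₃ = C₇·A₊ + C₈·A₋, μ³₂₃ = C₇·A₋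 − C₈·A₊, μ³₁₂ = C₉, and all remaining components zero. If q′ = p and p′ = −ω²·q hold at every time, then μ satisfies the operadic Lax equation d/dt μ^i_{jk} = Σ_{s=1}^{3} (M^i_s·μ^s_{jk} − M^s_j·μ^i_{sk} − M^s_k·μ^i_{js}) for all i, j, k at every time, where M = (ω/2)·[[0, −1, 0], [1, 0, 0], [0, 0, 0]]. -/
/-- The operadic Lax equation for time-dependent structure constants `μ^i_{jk}`:
`d/dt μ^i_{jk} = Σ_s (M^i_s·μ^s_{jk} − M^s_j·μ^i_{sk} − M^s_k·μ^i_{js})`. -/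
def OperadicLax (ω : ℝ) (μ : Fin 3 → Fin 3 → Fin 3 → ℝ → ℝ) : Prop :=
  ∀ (i j k : Fin 3) (t : ℝ),
    deriv (μ i j k) t =
      ∑ s : Fin 3,
        (M3 ω i s * μ s j k t - M3 ω s j * μ i s k t - M3 ω s k * μ i j s t)

/-!
Under Hamilton's equations `2 (p + i ω q)` rotates with angular velocity `ω`. Since
`(A₊ + i A₋)² = 2 (p + i ω q)` and `A₊ + i A₋ ≠ 0` (as `H > 0`), its square root `A₊ + i A₋`
rotates with angular velocity `ω / 2`: `A₊' = -(ω/2) A₋` and `A₋' = (ω/2) A₊`. So every component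
of `μ` evolves by a known linear flow, and the Lax equation becomes a componentwise identity.
-/

/-- In complex form, with `z = a + b i` and `w = x + y i`, the hypotheses say
`z * w = (i ω / 2) * z ^ 2`; cancelling `z ≠ 0` gives `w = (i ω / 2) * z`. -/
theorem rotation_of_square_rotation {ω a b x y : ℝ} (hab : a ^ 2 + b ^ 2 ≠ 0)
    (hre : a * x - b * y = -(ω * (a * b))) (him : b * x + a * y = ω / 2 * (a ^ 2 - b ^ 2)) :
    x = -(ω / 2) * b ∧ y = ω / 2 * a := by
  constructor
  · refine mul_left_cancel₀ hab ?_
    linear_combination a * hre + b * him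
  · refine mul_left_cancel₀ hab ?_
    linear_combination -b * hre + a * him

theorem deriv_auxiliary_of_hamilton {ω : ℝ} {q p Ap Am : ℝ → ℝ} {t : ℝ}
    (hAp : DifferentiableAt ℝ Ap t) (hAm : DifferentiableAt ℝ Am t)
    (hq : HasDerivAt q (p t) t) (hp : HasDerivAt p (-(ω ^ 2) * q t) t)
    (h2 : ∀ s, Ap s ^ 2 - Am s ^ 2 = 2 * p s) (h3 : ∀ s, Ap s * Am s = ω * q s)
    (hpos : 0 < p t ^ 2 + ω ^ 2 * q t ^ 2) :
    deriv Ap t = -(ω / 2) * Am t ∧ deriv Am t = ω / 2 * Ap t := by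
  have hdiff_sq : HasDerivAt (fun s => Ap s ^ 2 - Am s ^ 2) (2 * (-(ω ^ 2) * q t)) t := by
    simpa only [h2] using hp.const_mul 2
  have hprod : HasDerivAt (fun s => Ap s * Am s) (ω * p t) t := by
    simpa only [h3] using hq.const_mul ω
  have hre := ((hAp.hasDerivAt.pow 2).sub (hAm.hasDerivAt.pow 2)).unique hdiff_sq
  have him := (hAp.hasDerivAt.mul hAm.hasDerivAt).unique hprod
  have hnorm_sq : (Ap t ^ 2 + Am t ^ 2) ^ 2 = 4 * (p t ^ 2 + ω ^ 2 * q t ^ 2) := by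
    linear_combination (Ap t ^ 2 - Am t ^ 2 + 2 * p t) * h2 t + 4 * (Ap t * Am t + ω * q t) * h3 t
  refine rotation_of_square_rotation (fun h => ?_) ?_ ?_
  · rw [h] at hnorm_sq; linarith
  · linear_combination hre / 2 + ω * h3 t
  · linear_combination him - ω / 2 * h2 t

theorem operadicLax_μop {ω : ℝ} (C₁ C₂ C₃ C₄ C₅ C₆ C₇ C₈ C₉ : ℝ) {q p Ap Am : ℝ → ℝ}
    (hq : Differentiable ℝ q) (hp : Differentiable ℝ p)
    (hAp : Differentiable ℝ Ap) (hAm : Differentiable ℝ Am)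
    (dq : deriv q = p) (dp : deriv p = fun t => -(ω ^ 2) * q t)
    (dAp : deriv Ap = fun t => -(ω / 2) * Am t) (dAm : deriv Am = fun t => ω / 2 * Ap t) :
    OperadicLax ω (μop ω C₁ C₂ C₃ C₄ C₅ C₆ C₇ C₈ C₉ q p Ap Am) := by
  intro i j k t
  fin_cases i <;> fin_cases j <;> fin_cases k <;>
    simp (disch := fun_prop) only [μop, M3, Fin.sum_univ_three, Matrix.smul_apply, smul_eq_mul,
      Fin.reduceFinMk, Matrix.cons_val_zero, Matrix.cons_val_one, Matrix.cons_val_two,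
      Matrix.head_cons, Matrix.tail_cons, Matrix.of_apply,
      deriv.fun_neg, deriv_fun_add, deriv_fun_sub, deriv_const_mul_field', deriv_const',
      dq, dp, dAp, dAm] <;>
    ring

theorem hamilton_implies_operadic_lax_general (ω C₁ C₂ C₃ C₄ C₅ C₆ C₇ C₈ C₉ : ℝ)
    (q p Ap Am : ℝ → ℝ)
    (hq : Differentiable ℝ q) (hp : Differentiable ℝ p)
    (hAp : Differentiable ℝ Ap) (hAm : Differentiable ℝ Am)
    (h2 : ∀ t : ℝ, Ap t ^ 2 - Am t ^ 2 = 2 * p t)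
    (h3 : ∀ t : ℝ, Ap t * Am t = ω * q t)
    (hpos : ∀ t : ℝ, 0 < p t ^ 2 + ω ^ 2 * q t ^ 2)
    (hHam : ∀ t : ℝ, deriv q t = p t ∧ deriv p t = -(ω ^ 2) * q t) :
    OperadicLax ω (μop ω C₁ C₂ C₃ C₄ C₅ C₆ C₇ C₈ C₉ q p Ap Am) := by
  have dq : deriv q = p := funext fun t => (hHam t).1
  have dp : deriv p = fun t => -(ω ^ 2) * q t := funext fun t => (hHam t).2
  have dA t := deriv_auxiliary_of_hamilton (hAp t) (hAm t)
    ((hHam t).1 ▸ (hq t).hasDerivAt) ((hHam t).2 ▸ (hp t).hasDerivAt) h2 h3 (hpos t)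
  exact operadicLax_μop C₁ C₂ C₃ C₄ C₅ C₆ C₇ C₈ C₉ hq hp hAp hAm dq dp
    (funext fun t => (dA t).1) (funext fun t => (dA t).2)

/-- If `q, p` solve the harmonic-oscillator Hamiltonian equations, then the
structure constants `μ` satisfy the operadic Lax equation. -/
theorem hamilton_implies_operadic_lax (ω C₁ C₂ C₃ C₄ C₅ C₆ C₇ C₈ C₉ : ℝ)
    (q p Ap Am : ℝ → ℝ)
    (hq : Differentiable ℝ q) (hp : Differentiable ℝ p)
    (hAp : Differentiable ℝ Ap) (hAm : Differentiable ℝ Am)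
    (h1 : ∀ t : ℝ, Ap t ^ 2 + Am t ^ 2 = 2 * Real.sqrt (p t ^ 2 + ω ^ 2 * q t ^ 2))
    (h2 : ∀ t : ℝ, Ap t ^ 2 - Am t ^ 2 = 2 * p t)
    (h3 : ∀ t : ℝ, Ap t * Am t = ω * q t)
    (hpos : ∀ t : ℝ, 0 < p t ^ 2 + ω ^ 2 * q t ^ 2)
    (hHam : ∀ t : ℝ, deriv q t = p t ∧ deriv p t = -(ω ^ 2) * q t) :
    OperadicLax ω (μop ω C₁ C₂ C₃ C₄ C₅ C₆ C₇ C₈ C₉ q p Ap Am) :=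
  hamilton_implies_operadic_lax_general ω C₁ C₂ C₃ C₄ C₅ C₆ C₇ C₈ C₉ q p Ap Am hq hp hAp hAm h2 h3
    hpos hHam
end

section
/- Let ω be a nonzero real number, let C₁, …, C₉ be real parameters with C₂² + C₃² + C₅² + C₆² + C₇² + C₈² ≠ 0, and let q, p, A₊, A₋ : ℝ → ℝ be differentiable functions satisfying at every time: A₊² + A₋² = 2·√(p² + ω²q²), A₊² − A₋² = 2p, A₊·A₋ = ω·q, and p² + ω²q² > 0. Define the anti-commutative structure constants μ^i_{jk} by: μ^i_{jk} = −μ^i_{kj}, μ¹₂₃ = C₂·p − C₃·ω·q − C₄, μ²₁₃ = C₂·p − C₃·ω·q + C₄, μ¹₃₁ = C₂·ω·q + C₃·p − C₁, μ²₂₃ = C₂·ω·q + C₃·p + C₁, μ¹₁₂ = C₅·A₊ + C₆·A₋, μ²₁₂ = C₅·A₋ − C₆·A₊, μ³₁₃ = C₇·A₊ + C₈·A₋, μ³₂₃ = C₇·A₋ − C₈·A₊, μ³₁₂ = C₉, and all remaining components zero. Then μ satisfies the operadic Lax equation d/dt μ^i_{jk} = Σ_{s=1}^{3} (M^i_s·μ^s_{jk}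 − M^s_j·μ^i_{sk} − M^s_k·μ^i_{js}) for all i, j, k at every time, with M = (ω/2)·[[0, −1, 0], [1, 0, 0], [0, 0, 0]], if and only if q′ = p and p′ = −ω²·q hold at every time. In other words, (μ, M) is a 3-dimensional anti-commutative binary operadic Lax pair for the harmonic oscillator. -/
/-- `x + i y` satisfies `z' = iνz` at time `t`. -/
def RotatesAt (ν : ℝ) (x y : ℝ → ℝ) (t : ℝ) : Prop :=
  deriv x t = -(ν * y t) ∧ deriv y t = ν * x t

/-- Multiplying a curve in `ℂ` by the constant `c - id` preserves `z' = iνz`, and reflects it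
unless `c = d = 0`. -/
theorem rotatesAt_lincomb_iff {ν c d t : ℝ} {x y : ℝ → ℝ}
    (hx : DifferentiableAt ℝ x t) (hy : DifferentiableAt ℝ y t) :
    RotatesAt ν (fun s => c * x s + d * y s) (fun s => c * y s - d * x s) t ↔
      c ^ 2 + d ^ 2 = 0 ∨ RotatesAt ν x y t := by
  have hX : deriv (fun s => c * x s + d * y s) t = c * deriv x t + d * deriv y t :=
    ((hx.hasDerivAt.const_mul c).add (hy.hasDerivAt.const_mul d)).deriv
  have hY : deriv (fun s => c * y s - d * x s) t = c * deriv y t - d * deriv x t :=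
    ((hy.hasDerivAt.const_mul c).sub (hx.hasDerivAt.const_mul d)).deriv
  unfold RotatesAt
  rw [hX, hY]
  constructor
  · rintro ⟨h₁, h₂⟩
    by_cases hcd : c ^ 2 + d ^ 2 = 0
    · exact Or.inl hcd
    refine Or.inr ⟨mul_left_cancel₀ hcd ?_, mul_left_cancel₀ hcd ?_⟩
    · linear_combination c * h₁ - d * h₂
    · linear_combination d * h₁ + c * h₂
  · rintro (hcd | ⟨h₁, h₂⟩)
    · obtain ⟨rfl, rfl⟩ : c = 0 ∧ d = 0 := by
        constructor <;> nlinarith [sq_nonneg c, sq_nonneg d]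
      constructor <;> ring
    · constructor
      · linear_combination c * h₁ + d * h₂
      · linear_combination c * h₂ - d * h₁

/-- The squaring map `w ↦ w² / 2` of `ℂ` doubles angular velocities, away from `w = 0`. -/
theorem rotatesAt_sq_iff {ν t : ℝ} {a b : ℝ → ℝ}
    (ha : DifferentiableAt ℝ a t) (hb : DifferentiableAt ℝ b t) (hab : a t ^ 2 + b t ^ 2 ≠ 0) :
    RotatesAt (2 * ν) (fun s => (a s ^ 2 - b s ^ 2) / 2) (fun s => a s * b s) t ↔
      RotatesAt ν a b t := by
  have hX : deriv (fun s => (a s ^ 2 - b s ^ 2) / 2) t = a t * deriv a t - b t * deriv b t := by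
    rw [(((ha.hasDerivAt.fun_pow 2).fun_sub (hb.hasDerivAt.fun_pow 2)).div_const 2).deriv]
    push_cast
    ring
  have hY : deriv (fun s => a s * b s) t = deriv a t * b t + a t * deriv b t :=
    (ha.hasDerivAt.mul hb.hasDerivAt).deriv
  unfold RotatesAt
  rw [hX, hY]
  constructor
  · rintro ⟨h₁, h₂⟩
    refine ⟨mul_left_cancel₀ hab ?_, mul_left_cancel₀ hab ?_⟩
    · linear_combination a t * h₁ + b t * h₂
    · linear_combination a t * h₂ - b t * h₁
  · rintro ⟨h₁, h₂⟩
    constructor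
    · linear_combination a t * h₁ - b t * h₂
    · linear_combination b t * h₁ + a t * h₂

theorem rotatesAt_iff_harmonic {ω t : ℝ} {q p : ℝ → ℝ} (hω : ω ≠ 0) :
    RotatesAt ω p (fun s => ω * q s) t ↔ deriv q t = p t ∧ deriv p t = -(ω ^ 2) * q t := by
  unfold RotatesAt
  rw [deriv_const_mul_field', mul_right_inj' hω]
  constructor
  · rintro ⟨h₁, h₂⟩
    exact ⟨h₂, by linear_combination h₁⟩
  · rintro ⟨h₁, h₂⟩
    exact ⟨by linear_combination h₂, h₁⟩

/-- `μop` is `μOfPairs` with `X + iY = (C₂ + iC₃)(p + iωq)`, `a + ib = (C₅ - iC₆)(A₊ + iA₋)`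
and `e + if = (C₇ - iC₈)(A₊ + iA₋)`. -/
def μOfPairs (X Y a b e f : ℝ → ℝ) (c₁ c₄ c₉ : ℝ) : Fin 3 → Fin 3 → Fin 3 → ℝ → ℝ :=
  ![![![fun _ => 0, a, fun t => -(Y t - c₁)],
      ![fun t => -a t, fun _ => 0, fun t => X t - c₄],
      ![fun t => Y t - c₁, fun t => -(X t - c₄), fun _ => 0]],
    ![![fun _ => 0, b, fun t => X t + c₄],
      ![fun t => -b t, fun _ => 0, fun t => Y t + c₁],
      ![fun t => -(X t + c₄), fun t => -(Y t + c₁), fun _ => 0]],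
    ![![fun _ => 0, fun _ => c₉, e],
      ![fun _ => -c₉, fun _ => 0, f],
      ![fun t => -e t, fun t => -f t, fun _ => 0]]]

theorem operadicLax_μOfPairs_iff {ω c₁ c₄ c₉ : ℝ} {X Y a b e f : ℝ → ℝ} :
    OperadicLax ω (μOfPairs X Y a b e f c₁ c₄ c₉) ↔
      ∀ t, RotatesAt ω X Y t ∧ RotatesAt (ω / 2) a b t ∧ RotatesAt (ω / 2) e f t := by
  constructor
  · intro h t
    have e₁ := h 0 1 2 t
    have e₂ := h 1 1 2 t
    have e₃ := h 0 0 1 t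
    have e₄ := h 1 0 1 t
    have e₅ := h 2 0 2 t
    have e₆ := h 2 1 2 t
    simp only [μOfPairs, M3, Fin.sum_univ_three, Matrix.smul_apply, smul_eq_mul,
      Matrix.of_apply, Matrix.cons_val', Matrix.cons_val_zero, Matrix.cons_val_one,
      Matrix.cons_val, Matrix.cons_val_fin_one, Fin.isValue, deriv_add_const',
      deriv_sub_const_fun] at e₁ e₂ e₃ e₄ e₅ e₆
    refine ⟨⟨?_, ?_⟩, ⟨?_, ?_⟩, ⟨?_, ?_⟩⟩ <;> linarith
  · intro h i j k t
    obtain ⟨⟨hX, hY⟩, ⟨ha, hb⟩, ⟨he, hf⟩⟩ := h t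
    fin_cases i <;> fin_cases j <;> fin_cases k <;>
      simp only [μOfPairs, M3, Fin.sum_univ_three, Matrix.smul_apply, smul_eq_mul,
        Matrix.of_apply, Matrix.cons_val', Matrix.cons_val_zero, Matrix.cons_val_one,
        Matrix.cons_val, Matrix.cons_val_fin_one, Fin.isValue, Fin.mk_one, Fin.zero_eta,
        Fin.reduceFinMk, deriv.fun_neg', deriv_add_const', deriv_sub_const_fun, deriv_const',
        hX, hY, ha, hb, he, hf] <;>
      ring

theorem main_operadic_lax_pair_general (ω : ℝ) (hω : ω ≠ 0)
    (C₁ C₂ C₃ C₄ C₅ C₆ C₇ C₈ C₉ : ℝ)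
    (hC : C₂ ^ 2 + C₃ ^ 2 + C₅ ^ 2 + C₆ ^ 2 + C₇ ^ 2 + C₈ ^ 2 ≠ 0)
    (q p Ap Am : ℝ → ℝ)
    (hq : Differentiable ℝ q) (hp : Differentiable ℝ p)
    (hAp : Differentiable ℝ Ap) (hAm : Differentiable ℝ Am)
    (h2 : ∀ t : ℝ, Ap t ^ 2 - Am t ^ 2 = 2 * p t)
    (h3 : ∀ t : ℝ, Ap t * Am t = ω * q t)
    (hpos : ∀ t : ℝ, 0 < p t ^ 2 + ω ^ 2 * q t ^ 2) :
    OperadicLax ω (μop ω C₁ C₂ C₃ C₄ C₅ C₆ C₇ C₈ C₉ q p Ap Am) ↔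
      (∀ t : ℝ, deriv q t = p t ∧ deriv p t = -(ω ^ 2) * q t) := by
  have hA : ∀ t, Ap t ^ 2 + Am t ^ 2 ≠ 0 := fun t hA₀ => by
    have : (Ap t ^ 2 + Am t ^ 2) ^ 2 = 4 * (p t ^ 2 + ω ^ 2 * q t ^ 2) := by
      linear_combination (Ap t ^ 2 - Am t ^ 2 + 2 * p t) * h2 t
        + 4 * (Ap t * Am t + ω * q t) * h3 t
    rw [hA₀] at this
    linarith [hpos t]
  have hp_sq : p = fun s => (Ap s ^ 2 - Am s ^ 2) / 2 := funext fun s => by linarith [h2 s]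
  have hq_mul : (fun s => ω * q s) = fun s => Ap s * Am s := funext fun s => (h3 s).symm
  have hharm : ∀ t, RotatesAt (ω / 2) Ap Am t ↔
      deriv q t = p t ∧ deriv p t = -(ω ^ 2) * q t := fun t => by
    rw [← rotatesAt_iff_harmonic hω, hp_sq, hq_mul, ← rotatesAt_sq_iff (hAp t) (hAm t) (hA t),
      mul_div_cancel₀ ω two_ne_zero]
  have hXY : ∀ t, RotatesAt ω (fun s => C₂ * p s - C₃ * ω * q s)
      (fun s => C₂ * ω * q s + C₃ * p s) t ↔
        C₂ ^ 2 + (-C₃) ^ 2 = 0 ∨ RotatesAt ω p (fun s => ω * q s) t := fun t => by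
    convert rotatesAt_lincomb_iff (c := C₂) (d := -C₃) (hp t) ((hq t).const_mul ω) using 3 <;>
      ring
  have hC' : ¬(C₂ ^ 2 + (-C₃) ^ 2 = 0 ∧ C₅ ^ 2 + C₆ ^ 2 = 0 ∧ C₇ ^ 2 + C₈ ^ 2 = 0) :=
    fun ⟨h₁, h₂, h₃⟩ => hC (by linarith [neg_sq C₃])
  rw [show μop ω C₁ C₂ C₃ C₄ C₅ C₆ C₇ C₈ C₉ q p Ap Am = μOfPairs _ _ _ _ _ _ C₁ C₄ C₉ from rfl,
    operadicLax_μOfPairs_iff]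
  refine forall_congr' fun t => ?_
  rw [hXY, rotatesAt_lincomb_iff (hAp t) (hAm t), rotatesAt_lincomb_iff (hAp t) (hAm t),
    rotatesAt_iff_harmonic hω, hharm]
  tauto

/-- Main Theorem: for `ω ≠ 0` and parameters with
`C₂² + C₃² + C₅² + C₆² + C₇² + C₈² ≠ 0`, the pair `(μ, M)` is a 3-dimensional
anti-commutative binary operadic Lax pair for the harmonic oscillator: `μ`
satisfies the operadic Lax equation iff `q′ = p` and `p′ = −ω²q`. -/
theorem main_operadic_lax_pair (ω : ℝ) (hω : ω ≠ 0)
    (C₁ C₂ C₃ C₄ C₅ C₆ C₇ C₈ C₉ : ℝ)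
    (hC : C₂ ^ 2 + C₃ ^ 2 + C₅ ^ 2 + C₆ ^ 2 + C₇ ^ 2 + C₈ ^ 2 ≠ 0)
    (q p Ap Am : ℝ → ℝ)
    (hq : Differentiable ℝ q) (hp : Differentiable ℝ p)
    (hAp : Differentiable ℝ Ap) (hAm : Differentiable ℝ Am)
    (h1 : ∀ t : ℝ, Ap t ^ 2 + Am t ^ 2 = 2 * Real.sqrt (p t ^ 2 + ω ^ 2 * q t ^ 2))
    (h2 : ∀ t : ℝ, Ap t ^ 2 - Am t ^ 2 = 2 * p t)
    (h3 : ∀ t : ℝ, Ap t * Am t = ω * q t)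
    (hpos : ∀ t : ℝ, 0 < p t ^ 2 + ω ^ 2 * q t ^ 2) :
    OperadicLax ω (μop ω C₁ C₂ C₃ C₄ C₅ C₆ C₇ C₈ C₉ q p Ap Am) ↔
      (∀ t : ℝ, deriv q t = p t ∧ deriv p t = -(ω ^ 2) * q t) :=
  main_operadic_lax_pair_general ω hω C₁ C₂ C₃ C₄ C₅ C₆ C₇ C₈ C₉ hC q p Ap Am hq hp hAp hAm h2 h3
    hpos
end

section
/- Let ω be a real number, p₀ > 0, and let the initial structure constants be those of the Lie algebra so(3): ν¹₂₃ = ν²₃₁ = ν³₁₂ = 1 (antisymmetric in the lower indices, all other independent components zero), so in particular ν¹₃₁ = 0, ν¹₁₂ = 0, ν²₁₃ = −1, ν²₁₂ = 0, ν²₂₃ = 0, ν³₁₃ = 0, ν³₂₃ = 0, ν³₁₂ = 1. Then the unique solution C₁, …, C₉ of the system C₂p₀ − C₄ = ν¹₂₃, C₃p₀ − C₁ = ν¹₃₁, C₅√(2p₀) = ν¹₁₂, C₂p₀ + C₄ = ν²₁₃, −C₆√(2p₀) = ν²₁₂, C₃p₀ + C₁ = ν²₂₃, C₇√(2p₀)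 = ν³₁₃, −C₈√(2p₀) = ν³₂₃, C₉ = ν³₁₂ is C₄ = −1, C₉ = 1 and C₁ = C₂ = C₃ = C₅ = C₆ = C₇ = C₈ = 0; consequently C₂² + C₃² + C₅² + C₆² + C₇² + C₈² = 0, and the structure constants μ^i_{jk} defined by μ¹₂₃ = C₂p − C₃ωq − C₄, μ²₁₃ = C₂p − C₃ωq + C₄, μ¹₃₁ = C₂ωq + C₃p − C₁, μ²₂₃ = C₂ωq + C₃p + C₁, μ¹₁₂ = C₅A₊ + C₆A₋, μ²₁₂ = C₅A₋ − C₆A₊, μ³₁₃ = C₇A₊ + C₈A₋, μ³₂₃ = C₇A₋ − C₈A₊, μ³₁₂ = C₉ (antisymmetric, other components zero) coincide with ν^i_{jk} for all values of q, p, A₊, A₋. Hence so(3) is dynamically rigid over the harmonic oscillator. -/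
/-- The structure constants `μ^i_{jk}` of the operadic Lax representation of the
harmonic oscillator, evaluated at scalar values `q, p, A₊ = Ap, A₋ = Am`
(indices `1,2,3` correspond to `0,1,2`): `μ¹₂₃ = C₂p − C₃ωq − C₄`,
`μ²₁₃ = C₂p − C₃ωq + C₄`, `μ¹₃₁ = C₂ωq + C₃p − C₁`, `μ²₂₃ = C₂ωq + C₃p + C₁`,
`μ¹₁₂ = C₅A₊ + C₆A₋`, `μ²₁₂ = C₅A₋ − C₆A₊`, `μ³₁₃ = C₇A₊ + C₈A₋`,
`μ³₂₃ = C₇A₋ − C₈A₊`, `μ³₁₂ = C₉`, antisymmetric in the lower indices, with all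
remaining components zero. -/
def μC (ω C₁ C₂ C₃ C₄ C₅ C₆ C₇ C₈ C₉ q p Ap Am : ℝ) :
    Fin 3 → Fin 3 → Fin 3 → ℝ :=
  ![![![0, C₅ * Ap + C₆ * Am, -(C₂ * ω * q + C₃ * p - C₁)],
      ![-(C₅ * Ap + C₆ * Am), 0, C₂ * p - C₃ * ω * q - C₄],
      ![C₂ * ω * q + C₃ * p - C₁, -(C₂ * p - C₃ * ω * q - C₄), 0]],
    ![![0, C₅ * Am - C₆ * Ap, C₂ * p - C₃ * ω * q + C₄],
      ![-(C₅ * Am - C₆ * Ap), 0, C₂ * ω * q + C₃ * p + C₁],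
      ![-(C₂ * p - C₃ * ω * q + C₄), -(C₂ * ω * q + C₃ * p + C₁), 0]],
    ![![0, C₉, C₇ * Ap + C₈ * Am],
      ![-C₉, 0, C₇ * Am - C₈ * Ap],
      ![-(C₇ * Ap + C₈ * Am), -(C₇ * Am - C₈ * Ap), 0]]]

/-- Structure constants of `so(3)`: `ν¹₂₃ = ν²₃₁ = ν³₁₂ = 1`, antisymmetric in
the lower indices, all other components zero. -/
def so3ν : Fin 3 → Fin 3 → Fin 3 → ℝ :=
  ![![![0, 0, 0], ![0, 0, 1], ![0, -1, 0]],
    ![![0, 0, -1], ![0, 0, 0], ![1, 0, 0]],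
    ![![0, 1, 0], ![-1, 0, 0], ![0, 0, 0]]]

/-- For initial structure constants those of `so(3)` (so `ν¹₂₃ = 1`,
`ν¹₃₁ = 0`, `ν¹₁₂ = 0`, `ν²₁₃ = −1`, `ν²₁₂ = 0`, `ν²₂₃ = 0`, `ν³₁₃ = 0`,
`ν³₂₃ = 0`, `ν³₁₂ = 1`), the unique solution of the linear system is
`C₄ = −1`, `C₉ = 1`, all other `Cᵢ = 0`; consequently
`C₂² + C₃² + C₅² + C₆² + C₇² + C₈² = 0` and the structure constants `μ`
coincide with those of `so(3)` for all values of `q, p, A₊, A₋`: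
`so(3)` is dynamically rigid over the harmonic oscillator. -/
theorem so3_dynamically_rigid (ω p₀ : ℝ) (hp₀ : 0 < p₀) :
    ∀ C₁ C₂ C₃ C₄ C₅ C₆ C₇ C₈ C₉ : ℝ,
      ((C₂ * p₀ - C₄ = 1 ∧
        C₃ * p₀ - C₁ = 0 ∧
        C₅ * Real.sqrt (2 * p₀) = 0 ∧
        C₂ * p₀ + C₄ = -1 ∧
        -C₆ * Real.sqrt (2 * p₀) = 0 ∧
        C₃ * p₀ + C₁ = 0 ∧
        C₇ * Real.sqrt (2 * p₀) = 0 ∧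
        -C₈ * Real.sqrt (2 * p₀) = 0 ∧
        C₉ = 1)
        ↔
       (C₁ = 0 ∧ C₂ = 0 ∧ C₃ = 0 ∧ C₄ = -1 ∧ C₅ = 0 ∧ C₆ = 0 ∧ C₇ = 0 ∧
        C₈ = 0 ∧ C₉ = 1))
      ∧
      ((C₂ * p₀ - C₄ = 1 ∧
        C₃ * p₀ - C₁ = 0 ∧
        C₅ * Real.sqrt (2 * p₀) = 0 ∧
        C₂ * p₀ + C₄ = -1 ∧
        -C₆ * Real.sqrt (2 * p₀) = 0 ∧
        C₃ * p₀ + C₁ = 0 ∧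
        C₇ * Real.sqrt (2 * p₀) = 0 ∧
        -C₈ * Real.sqrt (2 * p₀) = 0 ∧
        C₉ = 1)
        →
       (C₂ ^ 2 + C₃ ^ 2 + C₅ ^ 2 + C₆ ^ 2 + C₇ ^ 2 + C₈ ^ 2 = 0 ∧
        ∀ q p Ap Am : ℝ, ∀ i j k : Fin 3,
          μC ω C₁ C₂ C₃ C₄ C₅ C₆ C₇ C₈ C₉ q p Ap Am i j k = so3ν i j k)) := by

  intro C₁ C₂ C₃ C₄ C₅ C₆ C₇ C₈ C₉
  have hs : Real.sqrt (2 * p₀) ≠ 0 := by positivity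
  have hp : p₀ ≠ 0 := ne_of_gt hp₀
  have key : (C₂ * p₀ - C₄ = 1 ∧ C₃ * p₀ - C₁ = 0 ∧ C₅ * Real.sqrt (2 * p₀) = 0 ∧
      C₂ * p₀ + C₄ = -1 ∧ -C₆ * Real.sqrt (2 * p₀) = 0 ∧ C₃ * p₀ + C₁ = 0 ∧
      C₇ * Real.sqrt (2 * p₀) = 0 ∧ -C₈ * Real.sqrt (2 * p₀) = 0 ∧ C₉ = 1) ↔
      (C₁ = 0 ∧ C₂ = 0 ∧ C₃ = 0 ∧ C₄ = -1 ∧ C₅ = 0 ∧ C₆ = 0 ∧ C₇ = 0 ∧ C₈ = 0 ∧ C₉ = 1) := by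
    constructor
    · rintro ⟨h1, h2, h3, h4, h5, h6, h7, h8, h9⟩
      have e5 : C₅ = 0 := by
        rcases mul_eq_zero.mp h3 with h | h; exact h; exact absurd h hs
      have e6 : C₆ = 0 := by
        have := mul_eq_zero.mp h5
        rcases this with h | h; · linarith [neg_eq_zero.mp h]
        · exact absurd h hs
      have e7 : C₇ = 0 := by
        rcases mul_eq_zero.mp h7 with h | h; exact h; exact absurd h hs
      have e8 : C₈ = 0 := by
        rcases mul_eq_zero.mp h8 with h | h; · linarith [neg_eq_zero.mp h]
        · exact absurd h hs
      have e2 : C₂ = 0 := by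
        have : C₂ * p₀ = 0 := by linarith
        rcases mul_eq_zero.mp this with h | h; exact h; exact absurd h hp
      have e3 : C₃ = 0 := by
        have : C₃ * p₀ = 0 := by linarith
        rcases mul_eq_zero.mp this with h | h; exact h; exact absurd h hp
      refine ⟨by linarith, e2, e3, by linarith, e5, e6, e7, e8, h9⟩
    · rintro ⟨e1, e2, e3, e4, e5, e6, e7, e8, e9⟩
      subst e1 e2 e3 e4 e5 e6 e7 e8 e9
      refine ⟨by ring, by ring, by ring, by ring, by ring, by ring, by ring, by ring, rfl⟩
  refine ⟨key, fun h => ?_⟩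
  obtain ⟨e1, e2, e3, e4, e5, e6, e7, e8, e9⟩ := key.mp h
  subst e1 e2 e3 e4 e5 e6 e7 e8 e9
  refine ⟨by ring, fun q p Ap Am i j k => ?_⟩
  fin_cases i <;> fin_cases j <;> fin_cases k <;>
    simp [μC, so3ν] <;> ring
end

section
/- Let ω be a real number, p₀ > 0, and let the initial structure constants be those of the 3-dimensional Heisenberg Lie algebra h₁: ν³₁₂ = 1 = −ν³₂₁ and all other components zero. Then the unique solution C₁, …, C₉ of the system C₂p₀ − C₄ = ν¹₂₃, C₃p₀ − C₁ = ν¹₃₁, C₅√(2p₀) = ν¹₁₂, C₂p₀ + C₄ = ν²₁₃, −C₆√(2p₀) = ν²₁₂, C₃p₀ + C₁ = ν²₂₃, C₇√(2p₀) = ν³₁₃, −C₈√(2p₀) = ν³₂₃, C₉ = ν³₁₂ is C₉ = 1 and C₁ = … = C₈ = 0; consequently C₂² + C₃² + C₅² + C₆² + C₇² + C₈² = 0, and the structure constants μ^i_{jk} defined by μ¹₂₃ = C₂p − C₃ωq − C₄, μ²₁₃ = C₂p − C₃ωq + C₄, μ¹₃₁ = C₂ωq + C₃p − C₁, μ²₂₃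 = C₂ωq + C₃p + C₁, μ¹₁₂ = C₅A₊ + C₆A₋, μ²₁₂ = C₅A₋ − C₆A₊, μ³₁₃ = C₇A₊ + C₈A₋, μ³₂₃ = C₇A₋ − C₈A₊, μ³₁₂ = C₉ (antisymmetric, other components zero) coincide with ν^i_{jk} for all values of q, p, A₊, A₋. Hence h₁ is dynamically rigid over the harmonic oscillator. -/
/-- Structure constants of the 3-dimensional Heisenberg algebra `h₁`:
`ν³₁₂ = 1 = −ν³₂₁`, all other components zero. -/
def h1ν : Fin 3 → Fin 3 → Fin 3 → ℝ :=
  ![![![0, 0, 0], ![0, 0, 0], ![0, 0, 0]],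
    ![![0, 0, 0], ![0, 0, 0], ![0, 0, 0]],
    ![![0, 1, 0], ![-1, 0, 0], ![0, 0, 0]]]

/-- For initial structure constants those of the Heisenberg algebra `h₁`
(only nonzero component `ν³₁₂ = 1 = −ν³₂₁`), the unique solution of the linear
system is `C₉ = 1` and `C₁ = ⋯ = C₈ = 0`; consequently
`C₂² + C₃² + C₅² + C₆² + C₇² + C₈² = 0` and the structure constants `μ`
coincide with those of `h₁` for all values of `q, p, A₊, A₋`:
`h₁` is dynamically rigid over the harmonic oscillator. -/
theorem heisenberg_dynamically_rigid (ω p₀ : ℝ) (hp₀ : 0 < p₀) :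
    ∀ C₁ C₂ C₃ C₄ C₅ C₆ C₇ C₈ C₉ : ℝ,
      ((C₂ * p₀ - C₄ = 0 ∧
        C₃ * p₀ - C₁ = 0 ∧
        C₅ * Real.sqrt (2 * p₀) = 0 ∧
        C₂ * p₀ + C₄ = 0 ∧
        -C₆ * Real.sqrt (2 * p₀) = 0 ∧
        C₃ * p₀ + C₁ = 0 ∧
        C₇ * Real.sqrt (2 * p₀) = 0 ∧
        -C₈ * Real.sqrt (2 * p₀) = 0 ∧
        C₉ = 1)
        ↔
       (C₁ = 0 ∧ C₂ = 0 ∧ C₃ = 0 ∧ C₄ = 0 ∧ C₅ = 0 ∧ C₆ = 0 ∧ C₇ = 0 ∧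
        C₈ = 0 ∧ C₉ = 1))
      ∧
      ((C₂ * p₀ - C₄ = 0 ∧
        C₃ * p₀ - C₁ = 0 ∧
        C₅ * Real.sqrt (2 * p₀) = 0 ∧
        C₂ * p₀ + C₄ = 0 ∧
        -C₆ * Real.sqrt (2 * p₀) = 0 ∧
        C₃ * p₀ + C₁ = 0 ∧
        C₇ * Real.sqrt (2 * p₀) = 0 ∧
        -C₈ * Real.sqrt (2 * p₀) = 0 ∧
        C₉ = 1)
        →
       (C₂ ^ 2 + C₃ ^ 2 + C₅ ^ 2 + C₆ ^ 2 + C₇ ^ 2 + C₈ ^ 2 = 0 ∧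
        ∀ q p Ap Am : ℝ, ∀ i j k : Fin 3,
          μC ω C₁ C₂ C₃ C₄ C₅ C₆ C₇ C₈ C₉ q p Ap Am i j k = h1ν i j k)) := by
  intro C₁ C₂ C₃ C₄ C₅ C₆ C₇ C₈ C₉
  have hs : Real.sqrt (2 * p₀) ≠ 0 := by
    have : (0:ℝ) < 2 * p₀ := by linarith
    positivity
  have key : (C₂ * p₀ - C₄ = 0 ∧ C₃ * p₀ - C₁ = 0 ∧ C₅ * Real.sqrt (2 * p₀) = 0 ∧
      C₂ * p₀ + C₄ = 0 ∧ -C₆ * Real.sqrt (2 * p₀) = 0 ∧ C₃ * p₀ + C₁ = 0 ∧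
      C₇ * Real.sqrt (2 * p₀) = 0 ∧ -C₈ * Real.sqrt (2 * p₀) = 0 ∧ C₉ = 1) ↔
      (C₁ = 0 ∧ C₂ = 0 ∧ C₃ = 0 ∧ C₄ = 0 ∧ C₅ = 0 ∧ C₆ = 0 ∧ C₇ = 0 ∧ C₈ = 0 ∧ C₉ = 1) := by
    constructor
    · rintro ⟨h1, h2, h3, h4, h5, h6, h7, h8, h9⟩
      have hC5 : C₅ = 0 := by
        rcases mul_eq_zero.1 h3 with h | h; exact h; exact absurd h hs
      have hC6 : C₆ = 0 := by
        rcases mul_eq_zero.1 h5 with h | h; linarith; exact absurd h hs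
      have hC7 : C₇ = 0 := by
        rcases mul_eq_zero.1 h7 with h | h; exact h; exact absurd h hs
      have hC8 : C₈ = 0 := by
        rcases mul_eq_zero.1 h8 with h | h; linarith; exact absurd h hs
      have hC2 : C₂ = 0 := by
        have : C₂ * p₀ = 0 := by linarith
        rcases mul_eq_zero.1 this with h | h; exact h; exact absurd h hp₀.ne'
      have hC3 : C₃ = 0 := by
        have : C₃ * p₀ = 0 := by linarith
        rcases mul_eq_zero.1 this with h | h; exact h; exact absurd h hp₀.ne'
      refine ⟨by linarith, hC2, hC3, by linarith, hC5, hC6, hC7, hC8, h9⟩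
    · rintro ⟨h1, h2, h3, h4, h5, h6, h7, h8, h9⟩
      subst h1 h2 h3 h4 h5 h6 h7 h8 h9
      norm_num
  refine ⟨key, fun h => ?_⟩
  obtain ⟨h1, h2, h3, h4, h5, h6, h7, h8, h9⟩ := key.1 h
  subst h1 h2 h3 h4 h5 h6 h7 h8 h9
  refine ⟨by ring, fun q p Ap Am i j k => ?_⟩
  fin_cases i <;> fin_cases j <;> fin_cases k <;> simp [μC, h1ν]
end

section
/- Let ω, q, p, p₀ be real numbers with p₀ ≠ 0, and set a = −(2ω/p₀)·q and b = (2/p₀)·p. Then the anti-commutative bilinear multiplication on ℝ³ defined on a basis e₁, e₂, e₃ by [e₁,e₂] = e₃, [e₂,e₃] = a·e₁ + b·e₂, [e₃,e₁] = b·e₁ − a·e₂ satisfies the Jacobi identity, and hence defines a Lie algebra structure on ℝ³. -/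
/-- The bilinear multiplication on `ℝ³` with structure constants `c`:
`(bracketC c x y) i = Σ_{j,k} c i j k · x j · y k`. -/
def bracketC (c : Fin 3 → Fin 3 → Fin 3 → ℝ) (x y : Fin 3 → ℝ) : Fin 3 → ℝ :=
  fun i => ∑ j : Fin 3, ∑ k : Fin 3, c i j k * x j * y k

/-- The structure constants of the multiplication `[e₁,e₂] = e₃`,
`[e₂,e₃] = a·e₁ + b·e₂`, `[e₃,e₁] = b·e₁ − a·e₂` (indices `1,2,3`
correspond to `0,1,2`). -/
def cDef (a b : ℝ) : Fin 3 → Fin 3 → Fin 3 → ℝ :=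
  ![![![0, 0, -b], ![0, 0, a], ![b, -a, 0]],
    ![![0, 0, a], ![0, 0, b], ![-a, -b, 0]],
    ![![0, 1, 0], ![-1, 0, 0], ![0, 0, 0]]]

/-- With `a = −(2ω/p₀)·q` and `b = (2/p₀)·p`, the anti-commutative bilinear
multiplication on `ℝ³` given by `[e₁,e₂] = e₃`, `[e₂,e₃] = a·e₁ + b·e₂`,
`[e₃,e₁] = b·e₁ − a·e₂` is anti-commutative and satisfies the Jacobi
identity, hence defines a Lie algebra structure on `ℝ³`. -/
theorem deformed_sl2_is_lie_algebra (ω q p p₀ : ℝ) (hp₀ : p₀ ≠ 0) :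
    (∀ x y : Fin 3 → ℝ,
        bracketC (cDef (-(2 * ω / p₀) * q) ((2 / p₀) * p)) x y
          = -(bracketC (cDef (-(2 * ω / p₀) * q) ((2 / p₀) * p)) y x))
    ∧
    (∀ x y z : Fin 3 → ℝ,
        bracketC (cDef (-(2 * ω / p₀) * q) ((2 / p₀) * p)) x
            (bracketC (cDef (-(2 * ω / p₀) * q) ((2 / p₀) * p)) y z)
          + bracketC (cDef (-(2 * ω / p₀) * q) ((2 / p₀) * p)) y
            (bracketC (cDef (-(2 * ω / p₀) * q) ((2 / p₀) * p)) z x)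
          + bracketC (cDef (-(2 * ω / p₀) * q) ((2 / p₀) * p)) z
            (bracketC (cDef (-(2 * ω / p₀) * q) ((2 / p₀) * p)) x y)
          = 0) := by
  constructor
  · intro x y
    funext i
    fin_cases i <;>
      simp [bracketC, cDef, Fin.sum_univ_three, Matrix.vecHead, Matrix.vecTail] <;> ring
  · intro x y z
    funext i
    fin_cases i <;>
      simp [bracketC, cDef, Fin.sum_univ_three, Matrix.vecHead, Matrix.vecTail] <;> ring
end
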